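/- arXiv:2106.06221 — 9 statements merged into one kernel-verified Lean document; each statement's English description precedes it below -/
import Mathlib

section
/- Let f : ℤ → ℤ be a bi-Lipschitz bijection (with respect to the usual metric on ℤ). Then either sup_{x ∈ ℤ} |f(x) − x| < ∞ or sup_{x ∈ ℤ} |f(x) + x| < ∞. -/
/-!
Co-Lipschitz continuity makes `f` injective, and `f a` can lie strictly between the values of
`f` at two neighbours `z, z + 1` only if `|f z - f a| < C`, hence only if `|z - a| < C ^ 2`.
So all values of `f` to the right of `a + C ^ 2` lie on one side of `f a`, and comparing `a`
with `a + 1` shows that this side does not depend on `a`: `f` or `-f` is increasing at scale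
`C ^ 2`. A bijection increasing at scale `D` moves points by a bounded amount, since it maps
`[u + D + 1, u' - D - 1]` into `(f u, f u')` and, being onto, pulls `(f u, f u')` back into
`[u - D, u' + D]`.
-/

open Function

def CoarselyStrictMono (D : ℤ) (f : ℤ → ℤ) : Prop :=
  ∀ a b, a + D < b → f a < f b

namespace CoarselyStrictMono

variable {D : ℤ} {f : ℤ → ℤ}

theorem nonneg (hm : CoarselyStrictMono D f) : 0 ≤ D := by
  by_contra! hD
  exact lt_irrefl _ (hm 0 0 (by omega))

theorem sub_le_of_le (hs : Surjective f) (hm : CoarselyStrictMono D f) {u u' : ℤ}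
    (h : u ≤ u') : f u' - f u ≤ u' - u + 2 * D + 2 := by
  have hsub : Finset.Ioo (f u) (f u') ⊆ (Finset.Icc (u - D) (u' + D)).image f := by
    intro y hy
    obtain ⟨w, rfl⟩ := hs y
    rw [Finset.mem_Ioo] at hy
    refine Finset.mem_image_of_mem f (Finset.mem_Icc.2 ⟨?_, ?_⟩)
    · by_contra! hw
      exact (hm w u (by omega)).not_gt hy.1
    · by_contra! hw
      exact (hm u' w (by omega)).not_gt hy.2
  have hcard := (Finset.card_le_card hsub).trans Finset.card_image_le
  rw [Int.card_Ioo, Int.card_Icc] at hcard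
  have := hm.nonneg
  omega

theorem le_sub_of_lt (hi : Injective f) (hm : CoarselyStrictMono D f) {u u' : ℤ}
    (h : u + 2 * D + 1 < u') : u' - u - 2 * D ≤ f u' - f u := by
  have hmaps : ∀ w ∈ Finset.Icc (u + D + 1) (u' - D - 1), f w ∈ Finset.Ioo (f u) (f u') := by
    intro w hw
    rw [Finset.mem_Icc] at hw
    exact Finset.mem_Ioo.2 ⟨hm u w (by omega), hm w u' (by omega)⟩
  have hcard := Finset.card_le_card_of_injOn f hmaps hi.injOn
  rw [Int.card_Ioo, Int.card_Icc] at hcard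
  omega

theorem abs_sub_sub_le (hf : Bijective f) (hm : CoarselyStrictMono D f) (a b : ℤ) :
    |(f b - f a) - (b - a)| ≤ 4 * D + 2 := by
  wlog hab : a ≤ b generalizing a b
  · have := this b a (by omega)
    rwa [← abs_neg, show -(f a - f b - (a - b)) = f b - f a - (b - a) by ring] at this
  have hD := hm.nonneg
  -- `le_sub_of_lt` needs a gap, so compare both `b` and `a` with a point far left of `a`.
  have upper := hm.sub_le_of_le hf.2 hab
  have lower := hm.le_sub_of_lt hf.1 (u := a - 2 * D - 2) (u' := b) (by omega)
  have back := hm.sub_le_of_le hf.2 (u := a - 2 * D - 2) (u' := a) (by omega)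
  rw [abs_le]
  constructor <;> linarith

theorem exists_abs_sub_le (hf : Bijective f) (hm : CoarselyStrictMono D f) :
    ∃ M, ∀ x, |f x - x| ≤ M := by
  refine ⟨|f 0| + (4 * D + 2), fun x => ?_⟩
  calc |f x - x| = |(f x - f 0 - (x - 0)) + f 0| := by ring_nf
    _ ≤ |f x - f 0 - (x - 0)| + |f 0| := abs_add_le _ _
    _ ≤ |f 0| + (4 * D + 2) := by linarith [hm.abs_sub_sub_le hf 0 x]

end CoarselyStrictMono

structure IsBiLipschitzWith (C : ℤ) (f : ℤ → ℤ) : Prop where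
  lipschitz : ∀ x y, |f x - f y| ≤ C * |x - y|
  colipschitz : ∀ x y, |x - y| ≤ C * |f x - f y|

namespace IsBiLipschitzWith

variable {C : ℤ} {f : ℤ → ℤ}

theorem injective (hf : IsBiLipschitzWith C f) : Injective f := by
  intro x y hxy
  have := hf.colipschitz x y
  rw [hxy, sub_self, abs_zero, mul_zero] at this
  exact sub_eq_zero.1 (abs_nonpos_iff.1 this)

theorem abs_sub_lt_sq_of_lt_of_lt (hf : IsBiLipschitzWith C f) (hC : 0 < C) {u v w : ℤ}
    (huv : f u < f v) (hvw : f v < f w) (huw : |w - u| ≤ 1) : |v - u| < C ^ 2 := by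
  have hstep : f w - f u ≤ C :=
    calc f w - f u ≤ |f w - f u| := le_abs_self _
      _ ≤ C * |w - u| := hf.lipschitz w u
      _ ≤ C := by nlinarith
  calc |v - u| ≤ C * |f v - f u| := hf.colipschitz v u
    _ ≤ C * (C - 1) := by
      gcongr
      rw [abs_of_pos (by linarith)]
      linarith
    _ < C ^ 2 := by nlinarith

theorem lt_add_one_iff_of_far (hf : IsBiLipschitzWith C f) (hC : 0 < C) {a z : ℤ}
    (hz : a + C ^ 2 < z) : f a < f (z + 1) ↔ f a < f z := by
  have hC2 : 0 < C ^ 2 := by positivity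
  rcases lt_or_gt_of_ne (hf.injective.ne (show a ≠ z by omega)) with h | h
  · refine iff_of_true (lt_of_not_ge fun h' => ?_) h
    have h' := h'.lt_of_ne (hf.injective.ne (by omega))
    have := hf.abs_sub_lt_sq_of_lt_of_lt hC h' h (show |z - (z + 1)| ≤ 1 by simp)
    rw [abs_lt] at this
    omega
  · refine iff_of_false (fun h' => ?_) h.not_gt
    have := hf.abs_sub_lt_sq_of_lt_of_lt hC h h' (show |z + 1 - z| ≤ 1 by simp)
    rw [abs_lt] at this
    omega

theorem lt_iff_of_far (hf : IsBiLipschitzWith C f) (hC : 0 < C) {a z : ℤ}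
    (hz : a + C ^ 2 < z) : f a < f z ↔ f a < f (a + C ^ 2 + 1) := by
  induction z, (show a + C ^ 2 + 1 ≤ z by omega) using Int.leInduction with
  | base => rfl
  | succ z hz' ih => rw [hf.lt_add_one_iff_of_far hC (by omega), ih (by omega)]

theorem lt_far_add_one_iff (hf : IsBiLipschitzWith C f) (hC : 0 < C) (a : ℤ) :
    f (a + 1) < f (a + 1 + C ^ 2 + 1) ↔ f a < f (a + C ^ 2 + 1) := by
  have hC2 : 0 < C ^ 2 := by positivity
  set x := a + 1 + C ^ 2 + 1 with hx
  rw [← hf.lt_iff_of_far hC (a := a) (z := x) (by omega)]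
  rcases lt_or_gt_of_ne (hf.injective.ne (show a + 1 ≠ x by omega)) with h | h
  · refine iff_of_true h (lt_of_not_ge fun h' => ?_)
    have h' := h'.lt_of_ne (hf.injective.ne (by omega))
    have := hf.abs_sub_lt_sq_of_lt_of_lt hC h h' (show |a - (a + 1)| ≤ 1 by simp)
    rw [abs_lt] at this
    omega
  · refine iff_of_false h.not_gt fun h' => ?_
    have := hf.abs_sub_lt_sq_of_lt_of_lt hC h' h (show |a + 1 - a| ≤ 1 by simp)
    rw [abs_lt] at this
    omega

theorem coarselyStrictMono_or_neg (hf : IsBiLipschitzWith C f) (hC : 0 < C) :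
    CoarselyStrictMono (C ^ 2) f ∨ CoarselyStrictMono (C ^ 2) (-f) := by
  have hC2 : 0 < C ^ 2 := by positivity
  have hshift (a : ℤ) : f a < f (a + C ^ 2 + 1) ↔ f 0 < f (0 + C ^ 2 + 1) := by
    induction a using Int.inductionOn' (b := 0) with
    | zero => rfl
    | succ k _ ih => rw [hf.lt_far_add_one_iff hC, ih]
    | pred k _ ih => rw [← ih, ← hf.lt_far_add_one_iff hC (k - 1), sub_add_cancel]
  rcases lt_or_gt_of_ne (hf.injective.ne (show 0 ≠ 0 + C ^ 2 + 1 by positivity)) with h | h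
  · exact Or.inl fun a b hab => (hf.lt_iff_of_far hC hab).2 ((hshift a).2 h)
  · refine Or.inr fun a b hab => neg_lt_neg ?_
    refine (lt_or_gt_of_ne (hf.injective.ne (show b ≠ a by omega))).resolve_right fun hlt => ?_
    exact h.not_gt ((hshift a).1 ((hf.lt_iff_of_far hC hab).1 hlt))

end IsBiLipschitzWith

/-- Benjamini–Shamov: a bi-Lipschitz bijection `f : ℤ → ℤ` satisfies either
`sup |f x − x| < ∞` or `sup |f x + x| < ∞`. -/
theorem biLipschitz_bijection_int (f : ℤ → ℤ) (hbij : Function.Bijective f)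
    (C : ℤ) (hC : 0 < C)
    (hlip : ∀ x y : ℤ, |f x - f y| ≤ C * |x - y|)
    (hcolip : ∀ x y : ℤ, |x - y| ≤ C * |f x - f y|) :
    (∃ M : ℤ, ∀ x : ℤ, |f x - x| ≤ M) ∨ (∃ M : ℤ, ∀ x : ℤ, |f x + x| ≤ M) := by
  have hf : IsBiLipschitzWith C f := ⟨hlip, hcolip⟩
  rcases hf.coarselyStrictMono_or_neg hC with hm | hm
  · exact Or.inl (hm.exists_abs_sub_le hbij)
  · have hbij' : Function.Bijective (-f) := (Equiv.neg ℤ).bijective.comp hbij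
    obtain ⟨M, hM⟩ := hm.exists_abs_sub_le hbij'
    exact Or.inr ⟨M, fun x => by simpa only [Pi.neg_apply, ← neg_add', abs_neg] using hM x⟩
end

section
/- Let X be a compact Hausdorff space, f : X → X a minimal continuous map (i.e., every forward orbit is dense), and g : X → ℝ a continuous function such that sup_{n ∈ ℕ} |Σ_{i=0}^{n} g(f^i(x₀))| < ∞ for some point x₀ ∈ X. Then there exists a continuous function φ : X → ℝ with φ ∘ f − φ = g. -/
/-!
Consider the skew product `F (x, t) = (f x, t + g x)` on `X × ℝ`. The bounded Birkhoff sums make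
an `F`-orbit relatively compact, so its closure contains a minimal closed invariant set `M`, which
is the orbit closure of each of its points. Vertical translations commute with `F`, so if `M` met
a fibre in two points, the translation carrying one to the other would map `M` into itself, and
iterating it would make `M` unbounded. Hence `M` is a graph over a closed invariant subset of `X`,
which is all of `X` by minimality of `f`. A compact graph is the graph of a continuous `φ`, and
`F`-invariance of the graph of `φ` reads `φ (f x) = φ x + g x`.
-/

open Set Function

section MinimalSet

variable {Y : Type*} [TopologicalSpace Y] {F : Y → Y} {M : Set Y}

structure IsMinimalSet (F : Y → Y) (M : Set Y) : Prop where
  nonempty : M.Nonempty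
  isClosed : IsClosed M
  mapsTo : MapsTo F M M
  eq_of_subset : ∀ A ⊆ M, A.Nonempty → IsClosed A → MapsTo F A A → A = M

theorem IsCompact.exists_isMinimalSet_subset {K : Set Y} (hK : IsCompact K) (hKc : IsClosed K)
    (hne : K.Nonempty) (hKF : MapsTo F K K) : ∃ M ⊆ K, IsMinimalSet F M := by
  let S : Set (Set Y) := {A | A ⊆ K ∧ A.Nonempty ∧ IsClosed A ∧ MapsTo F A A}
  obtain ⟨M, hMK, hM⟩ := zorn_superset_nonempty S (fun c hcS hchain hcne => by
    have : Nonempty c := hcne.to_subtype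
    refine ⟨⋂₀ c, ⟨?_, ?_, ?_, ?_⟩, fun A hA => sInter_subset_of_mem hA⟩
    · exact (sInter_subset_of_mem hcne.some_mem).trans (hcS hcne.some_mem).1
    · exact IsCompact.nonempty_sInter_of_directed_nonempty_isCompact_isClosed
        (show IsChain (· ⊇ ·) c from hchain.symm).directedOn (fun A hA => (hcS hA).2.1)
        (fun A hA => hK.of_isClosed_subset (hcS hA).2.2.1 (hcS hA).1) (fun A hA => (hcS hA).2.2.1)
    · exact isClosed_sInter fun A hA => (hcS hA).2.2.1
    · exact mapsTo_sInter.2 fun A hA =>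
        (hcS hA).2.2.2.mono_left (sInter_subset_of_mem hA)) K ⟨subset_rfl, hne, hKc, hKF⟩
  obtain ⟨-, hMne, hMc, hMF⟩ := hM.prop
  exact ⟨M, hMK, hMne, hMc, hMF, fun A hAM hAne hAc hAF =>
    (hM.eq_of_subset ⟨hAM.trans hMK, hAne, hAc, hAF⟩ hAM)⟩

theorem mapsTo_closure_range_iterate (hF : Continuous F) (p : Y) :
    MapsTo F (closure (range fun n => F^[n] p)) (closure (range fun n => F^[n] p)) :=
  MapsTo.closure (by rintro _ ⟨n, rfl⟩; exact ⟨n + 1, iterate_succ_apply' F n p⟩) hF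

theorem IsMinimalSet.closure_range_iterate_eq (hM : IsMinimalSet F M) (hF : Continuous F)
    {p : Y} (hp : p ∈ M) : closure (range fun n => F^[n] p) = M :=
  hM.eq_of_subset _
    (closure_minimal (range_subset_iff.2 fun n => hM.mapsTo.iterate n hp) hM.isClosed)
    ⟨p, subset_closure ⟨0, rfl⟩⟩ isClosed_closure (mapsTo_closure_range_iterate hF p)

theorem IsMinimalSet.mapsTo_of_commute (hM : IsMinimalSet F M) (hF : Continuous F)
    {T : Y → Y} (hT : Continuous T) (hFT : Function.Commute F T) {p : Y} (hp : p ∈ M)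
    (hTp : T p ∈ M) : MapsTo T M M := by
  have horbit : MapsTo T (range fun n => F^[n] p) M := by
    rintro _ ⟨n, rfl⟩
    rw [← (hFT.iterate_left n).eq]
    exact hM.mapsTo.iterate n hTp
  have h := horbit.closure hT
  rwa [hM.isClosed.closure_eq, hM.closure_range_iterate_eq hF hp] at h

end MinimalSet

theorem eq_univ_of_dense_orbits {X : Type*} [TopologicalSpace X] {f : X → X}
    (hmin : ∀ x : X, Dense (range fun n : ℕ => f^[n] x)) {A : Set X} (hA : IsClosed A)
    (hne : A.Nonempty) (hAf : MapsTo f A A) : A = univ := by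
  obtain ⟨x, hx⟩ := hne
  refine eq_univ_of_univ_subset ?_
  rw [← (hmin x).closure_eq]
  exact closure_minimal (range_subset_iff.2 fun n => hAf.iterate n hx) hA

theorem not_mapsTo_add_right_of_bddAbove {α : Type*} [AddCommGroup α] [LinearOrder α]
    [IsOrderedAddMonoid α] [Archimedean α] {S : Set α} (hS : BddAbove S) (hne : S.Nonempty)
    {c : α} (hc : 0 < c) : ¬ MapsTo (· + c) S S := by
  intro hSc
  obtain ⟨b, hb⟩ := hS
  obtain ⟨s, hs⟩ := hne
  obtain ⟨n, hn⟩ := Archimedean.arch (b - s) hc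
  have hmem : s + (n + 1) • c ∈ S := by
    simpa only [add_right_iterate_apply] using hSc.iterate (n + 1) hs
  have hle : s + n • c + c ≤ s + n • c := by
    rw [succ_nsmul, ← add_assoc] at hmem
    exact (hb hmem).trans (sub_le_iff_le_add'.1 hn)
  exact (lt_add_of_pos_right _ hc).not_ge hle

theorem IsCompact.exists_continuous_graph_subset {X Y : Type*} [TopologicalSpace X]
    [TopologicalSpace Y] [T2Space X] {M : Set (X × Y)} (hM : IsCompact M)
    (hinj : InjOn Prod.fst M) (hsurj : SurjOn Prod.fst M univ) :
    ∃ φ : X → Y, Continuous φ ∧ ∀ x, (x, φ x) ∈ M := by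
  have : CompactSpace M := isCompact_iff_compactSpace.mp hM
  let e : M ≃ₜ X := (continuous_fst.comp continuous_subtype_val).homeoOfEquivCompactToT2
    (f := Equiv.ofBijective (fun p : M => p.1.1)
      ⟨hinj.injective, fun x => by
        obtain ⟨p, hp, rfl⟩ := hsurj (mem_univ x)
        exact ⟨⟨p, hp⟩, rfl⟩⟩)
  refine ⟨fun x => (e.symm x : X × Y).2,
    continuous_snd.comp (continuous_subtype_val.comp e.symm.continuous), fun x => ?_⟩
  have hfst : (e.symm x : X × Y).1 = x := e.apply_symm_apply x
  rw [show (x, _) = (e.symm x : X × Y) from Prod.ext hfst.symm rfl]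
  exact (e.symm x).2

section SkewProduct

variable {X G : Type*} [AddCommMonoid G]

def skewProduct (f : X → X) (g : X → G) (p : X × G) : X × G := (f p.1, p.2 + g p.1)

theorem skewProduct_iterate (f : X → X) (g : X → G) (n : ℕ) (x : X) (t : G) :
    (skewProduct f g)^[n] (x, t) = (f^[n] x, t + birkhoffSum f g n x) := by
  induction n generalizing x t with
  | zero => simp [birkhoffSum_zero]
  | succ n ih =>
    rw [iterate_succ_apply, skewProduct, ih, birkhoffSum_succ', iterate_succ_apply, add_assoc]

theorem continuous_skewProduct [TopologicalSpace X] [TopologicalSpace G] [ContinuousAdd G]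
    {f : X → X} {g : X → G} (hf : Continuous f) (hg : Continuous g) :
    Continuous (skewProduct f g) :=
  (hf.comp continuous_fst).prodMk (continuous_snd.add (hg.comp continuous_fst))

theorem commute_skewProduct_map_add_right (f : X → X) (g : X → G) (c : G) :
    Function.Commute (skewProduct f g) (Prod.map id (· + c)) := fun _ =>
  Prod.ext rfl (add_right_comm _ _ _)

theorem semiconj_fst_skewProduct (f : X → X) (g : X → G) :
    Semiconj Prod.fst (skewProduct f g) f := fun _ => rfl

end SkewProduct

section MinimalGraph

variable {X : Type*} [TopologicalSpace X] {f : X → X} {g : X → ℝ} {M : Set (X × ℝ)}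

theorem IsMinimalSet.injOn_fst_of_skewProduct (hM : IsMinimalSet (skewProduct f g) M)
    (hMc : IsCompact M) (hf : Continuous f) (hg : Continuous g) : InjOn Prod.fst M := by
  have key : ∀ {x : X} {s t : ℝ}, (x, s) ∈ M → (x, t) ∈ M → ¬ s < t := by
    intro x s t hs ht hst
    have hT : MapsTo (Prod.map id (· + (t - s))) M M :=
      hM.mapsTo_of_commute (continuous_skewProduct hf hg)
        (continuous_id.prodMap (continuous_add_const _)) (commute_skewProduct_map_add_right f g _)
        hs (by simpa only [Prod.map, id, add_sub_cancel] using ht)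
    have hsnd : MapsTo (· + (t - s)) (Prod.snd '' M) (Prod.snd '' M) :=
      (show Semiconj Prod.snd (Prod.map id (· + (t - s))) (· + (t - s)) from fun _ => rfl)
        |>.mapsTo_image hT
    exact not_mapsTo_add_right_of_bddAbove (hMc.image continuous_snd).bddAbove
      ⟨s, (x, s), hs, rfl⟩ (sub_pos.2 hst) hsnd
  rintro ⟨x, s⟩ hs ⟨x', t⟩ ht (rfl : x = x')
  exact Prod.ext rfl (le_antisymm (not_lt.1 (key ht hs)) (not_lt.1 (key hs ht)))

theorem IsMinimalSet.surjOn_fst_of_skewProduct [T2Space X]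
    (hmin : ∀ x : X, Dense (range fun n : ℕ => f^[n] x))
    (hM : IsMinimalSet (skewProduct f g) M) (hMc : IsCompact M) : SurjOn Prod.fst M univ := by
  rw [SurjOn, ← eq_univ_of_dense_orbits hmin (hMc.image continuous_fst).isClosed
    (hM.nonempty.image _) ((semiconj_fst_skewProduct f g).mapsTo_image hM.mapsTo)]

end MinimalGraph

/-- Gottschalk–Hedlund theorem: if `f : X → X` is a minimal continuous map of a compact
Hausdorff space, `g : X → ℝ` continuous, and the partial sums of `g` along the forward
orbit of some point `x₀` are bounded, then `g = φ ∘ f − φ` for a continuous `φ`. -/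
theorem gottschalk_hedlund {X : Type*} [TopologicalSpace X] [CompactSpace X] [T2Space X]
    (f : X → X) (hf : Continuous f)
    (hmin : ∀ x : X, Dense (Set.range fun n : ℕ => f^[n] x))
    (g : X → ℝ) (hg : Continuous g)
    (x₀ : X) (C : ℝ)
    (hbd : ∀ n : ℕ, |∑ i ∈ Finset.range (n + 1), g (f^[i] x₀)| ≤ C) :
    ∃ φ : X → ℝ, Continuous φ ∧ ∀ x, φ (f x) - φ x = g x := by
  set F := skewProduct f g
  -- Starting at `F (x₀, 0)` matches the sums over `range (n + 1)` in `hbd`.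
  set K := closure (range fun n => F^[n] (F (x₀, 0)))
  have horbit : (range fun n => F^[n] (F (x₀, 0))) ⊆ univ ×ˢ Icc (-C) C := by
    rintro _ ⟨n, rfl⟩
    show F^[n] (F (x₀, 0)) ∈ _
    rw [← iterate_succ_apply, skewProduct_iterate, zero_add]
    exact ⟨mem_univ _, abs_le.1 (hbd n)⟩
  have hK : IsCompact K := (isCompact_univ.prod isCompact_Icc).closure_of_subset horbit
  obtain ⟨M, hMK, hM⟩ := hK.exists_isMinimalSet_subset isClosed_closure
    ⟨_, subset_closure ⟨0, rfl⟩⟩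
    (mapsTo_closure_range_iterate (continuous_skewProduct hf hg) _)
  have hMc : IsCompact M := hK.of_isClosed_subset hM.isClosed hMK
  have hinj := hM.injOn_fst_of_skewProduct hMc hf hg
  obtain ⟨φ, hφ, hφM⟩ := hMc.exists_continuous_graph_subset hinj
    (hM.surjOn_fst_of_skewProduct hmin hMc)
  refine ⟨φ, hφ, fun x => ?_⟩
  have h : φ (f x) = φ x + g x :=
    congrArg Prod.snd (hinj (hφM (f x)) (hM.mapsTo (hφM x)) rfl)
  rw [h, add_sub_cancel_left]
end

section
/- Let α : ℤ × X → X be a continuous minimal ℤ-action on a compact Hausdorff space X, let K be a topological group and K₀ ⊆ K a closed subgroup. Suppose c : ℤ × X → K₀ is a continuous cocycle (c(m+n, x) = c(m, α(n,x))·c(n,x)) and there is a continuous map f : X → K with c(n, x) = f(α(n,x))·f(x)⁻¹ for all n ∈ ℤ, x ∈ X. Then there exists a continuous map f' : X → K₀ with c(n, x) = f'(α(n,x))·f'(x)⁻¹ for all n ∈ ℤ, x ∈ X. -/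
theorem coboundary_independent_of_target_group_general
    {X : Type*} [TopologicalSpace X]
    {K : Type*} [Group K] [TopologicalSpace K] [IsTopologicalGroup K]
    (α : ℤ → X → X)
    (hmin : ∀ x : X, Dense (Set.range fun n : ℤ => α n x))
    (K₀ : Subgroup K) (hK₀ : IsClosed (K₀ : Set K))
    (c : ℤ → X → K) (hcK₀ : ∀ n x, c n x ∈ K₀)
    (f : X → K) (hf : Continuous f)
    (hcob : ∀ n x, c n x = f (α n x) * (f x)⁻¹) :
    ∃ f' : X → K, Continuous f' ∧ (∀ x, f' x ∈ K₀) ∧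
      ∀ n x, c n x = f' (α n x) * (f' x)⁻¹ := by
  rcases isEmpty_or_nonempty X with _ | ⟨⟨x₀⟩⟩
  · exact ⟨f, hf, isEmptyElim, hcob⟩
  have hf' : Continuous fun x => f x * (f x₀)⁻¹ := hf.mul continuous_const
  refine ⟨fun x => f x * (f x₀)⁻¹, hf', fun x => ?_, fun n x => by rw [hcob]; group⟩
  -- On the orbit of `x₀` the normalised transfer function is `c n x₀ ∈ K₀`; the orbit is dense.
  exact DenseRange.induction_on (hmin x₀) (p := fun x => f x * (f x₀)⁻¹ ∈ K₀) x
    (hK₀.preimage hf') fun n => hcob n x₀ ▸ hcK₀ n x₀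

/-- If a `K₀`-valued continuous cocycle over a minimal `ℤ`-action is a coboundary with
transfer function valued in the ambient topological group `K ⊇ K₀` (with `K₀` closed),
then it is a coboundary with a `K₀`-valued transfer function. -/
theorem coboundary_independent_of_target_group
    {X : Type*} [TopologicalSpace X] [CompactSpace X] [T2Space X]
    {K : Type*} [Group K] [TopologicalSpace K] [IsTopologicalGroup K]
    (α : ℤ → X → X) (hcont : Continuous fun p : ℤ × X => α p.1 p.2)
    (hzero : ∀ x, α 0 x = x) (hadd : ∀ m n x, α (m + n) x = α m (α n x))
    (hmin : ∀ x : X, Dense (Set.range fun n : ℤ => α n x))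
    (K₀ : Subgroup K) (hK₀ : IsClosed (K₀ : Set K))
    (c : ℤ → X → K) (hcK₀ : ∀ n x, c n x ∈ K₀)
    (hccont : Continuous fun p : ℤ × X => c p.1 p.2)
    (hcocycle : ∀ m n x, c (m + n) x = c m (α n x) * c n x)
    (f : X → K) (hf : Continuous f)
    (hcob : ∀ n x, c n x = f (α n x) * (f x)⁻¹) :
    ∃ f' : X → K, Continuous f' ∧ (∀ x, f' x ∈ K₀) ∧
      ∀ n x, c n x = f' (α n x) * (f' x)⁻¹ :=
  coboundary_independent_of_target_group_general α hmin K₀ hK₀ c hcK₀ f hf hcob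
end

section
/- Let G and K be finitely generated groups with symmetric generating sets S and T, and let G ↷ X and K ↷ Y be topologically free continuous actions on compact spaces that are continuously orbit equivalent with orbit cocycle a : G × X → K. Then for each fixed x ∈ X, the map g ↦ a(g, x) is Lipschitz from (G, d_S) to (K, d_T), where d_S and d_T are the right-invariant word metrics; specifically d_T(a(g₁,x), a(g₂,x)) ≤ C · d_S(g₁, g₂) with C = sup_{x∈X} max_{s∈S} |a(s,x)|_T. -/
/-!
Topological freeness of `K ↷ Y` makes `a` a cocycle: both `a (g * g') x` and
`a g (g' • x) * a g' x` move `φ x` to `φ ((g * g') • x)`, their quotient is locally constant in `x`,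
and an element of `K` fixing every point of a nonempty open set is `1`. Writing `g₂ * g₁⁻¹` as a
shortest word in `S`, the cocycle identity expands `a g₂ x * (a g₁ x)⁻¹ = a (g₂ * g₁⁻¹) (g₁ • x)`
into a product of values of `a` on generators, each of `T`-length at most `C`.
-/

/-- Word length of `g` with respect to a generating set `S`. -/
noncomputable def wordLength {G : Type*} [Group G] (S : Set G) (g : G) : ℕ :=
  sInf {n | ∃ l : List G, (∀ x ∈ l, x ∈ S) ∧ l.prod = g ∧ l.length = n}

section WordLength

variable {G : Type*} [Group G] {S : Set G}

theorem Submonoid.closure_eq_top_of_inv_mem (hSsym : ∀ s ∈ S, s⁻¹ ∈ S)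
    (hSgen : Subgroup.closure S = ⊤) : Submonoid.closure S = ⊤ := by
  have hS : S ∪ S⁻¹ = S := Set.union_eq_left.2 fun s hs => by simpa using hSsym _ hs
  rw [← hS, ← Subgroup.closure_toSubmonoid, hSgen, Subgroup.top_toSubmonoid]

theorem wordLength_le_length {l : List G} (hl : ∀ x ∈ l, x ∈ S) :
    wordLength S l.prod ≤ l.length :=
  Nat.sInf_le ⟨l, hl, rfl, rfl⟩

theorem exists_list_length_eq_wordLength (hS : Submonoid.closure S = ⊤) (g : G) :
    ∃ l : List G, (∀ x ∈ l, x ∈ S) ∧ l.prod = g ∧ l.length = wordLength S g := by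
  obtain ⟨l, hlS, hl⟩ := Submonoid.exists_list_of_mem_closure (hS ▸ Submonoid.mem_top g)
  exact Nat.sInf_mem
    (s := {n | ∃ l : List G, (∀ x ∈ l, x ∈ S) ∧ l.prod = g ∧ l.length = n})
    ⟨l.length, l, hlS, hl, rfl⟩

theorem wordLength_mul_le (hS : Submonoid.closure S = ⊤) (g h : G) :
    wordLength S (g * h) ≤ wordLength S g + wordLength S h := by
  obtain ⟨l₁, hl₁S, rfl, hl₁⟩ := exists_list_length_eq_wordLength hS g
  obtain ⟨l₂, hl₂S, rfl, hl₂⟩ := exists_list_length_eq_wordLength hS h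
  calc wordLength S (l₁.prod * l₂.prod) = wordLength S (l₁ ++ l₂).prod := by
        rw [List.prod_append]
    _ ≤ (l₁ ++ l₂).length := wordLength_le_length fun x hx =>
        (List.mem_append.1 hx).elim (hl₁S x) (hl₂S x)
    _ = _ := by rw [List.length_append, hl₁, hl₂]

end WordLength

section Cocycle

variable {G K X : Type*} [Group G] [Group K] [MulAction G X] {c : G → X → K}

theorem cocycle_one (hc : ∀ g g' x, c (g * g') x = c g (g' • x) * c g' x) (x : X) :
    c 1 x = 1 := by
  simpa using hc 1 1 x

theorem wordLength_cocycle_list_prod_le (hc : ∀ g g' x, c (g * g') x = c g (g' • x) * c g' x)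
    {S : Set G} {T : Set K} (hT : Submonoid.closure T = ⊤) {C : ℕ}
    (hC : ∀ x, ∀ s ∈ S, wordLength T (c s x) ≤ C) :
    ∀ l : List G, (∀ s ∈ l, s ∈ S) → ∀ x, wordLength T (c l.prod x) ≤ C * l.length
  | [], _, x => by
    simpa [cocycle_one hc x] using wordLength_le_length (S := T) (l := []) (by simp)
  | s :: l, hl, x => by
    calc wordLength T (c (s :: l).prod x)
        = wordLength T (c s (l.prod • x) * c l.prod x) := by rw [List.prod_cons, hc]
      _ ≤ wordLength T (c s (l.prod • x)) + wordLength T (c l.prod x) :=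
          wordLength_mul_le hT _ _
      _ ≤ C + C * l.length :=
          add_le_add (hC _ s (hl s List.mem_cons_self))
            (wordLength_cocycle_list_prod_le hc hT hC l
              (fun t ht => hl t (List.mem_cons_of_mem _ ht)) x)
      _ = C * (s :: l).length := by rw [List.length_cons]; ring

theorem wordLength_cocycle_le (hc : ∀ g g' x, c (g * g') x = c g (g' • x) * c g' x)
    {S : Set G} {T : Set K} (hS : Submonoid.closure S = ⊤) (hT : Submonoid.closure T = ⊤)
    {C : ℕ} (hC : ∀ x, ∀ s ∈ S, wordLength T (c s x) ≤ C) (g : G) (x : X) :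
    wordLength T (c g x) ≤ C * wordLength S g := by
  obtain ⟨l, hlS, rfl, hl⟩ := exists_list_length_eq_wordLength hS g
  exact hl ▸ wordLength_cocycle_list_prod_le hc hT hC l hlS x

end Cocycle

section OrbitEquivalence

variable {G K X Y : Type*} [Group G] [Group K] [TopologicalSpace K] [DiscreteTopology K]
  [TopologicalSpace X] [TopologicalSpace Y] [MulAction G X] [MulAction K Y]

theorem eq_one_of_continuous_of_smul_eq_self
    (hKfree : ∀ k : K, k ≠ 1 → Dense {y : Y | k • y ≠ y})
    {f : Y → K} (hf : Continuous f) (hfix : ∀ y, f y • y = y) (y : Y) : f y = 1 := by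
  by_contra hne
  obtain ⟨z, hzf, hz⟩ := (hKfree _ hne).inter_open_nonempty (f ⁻¹' {f y})
    (hf.isOpen_preimage _ (isOpen_discrete _)) ⟨y, rfl⟩
  exact hz (hzf ▸ hfix z)

theorem orbit_cocycle_mul (hGcont : ∀ g : G, Continuous fun x : X => g • x)
    (hKfree : ∀ k : K, k ≠ 1 → Dense {y : Y | k • y ≠ y})
    (φ : X ≃ₜ Y) {a : G → X → K} (ha : ∀ g, Continuous (a g))
    (haφ : ∀ g x, φ (g • x) = a g x • φ x) (g g' : G) (x : X) :
    a (g * g') x = a g (g' • x) * a g' x := by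
  set q : X → K := fun x => (a (g * g') x)⁻¹ * (a g (g' • x) * a g' x)
  have hq : Continuous q := (ha _).inv.mul (((ha g).comp (hGcont g')).mul (ha g'))
  have hfix : ∀ x, q x • φ x = φ x := fun x => by
    simp only [q, mul_smul, ← haφ, inv_smul_eq_iff]
  have hq₁ : q (φ.symm (φ x)) = 1 :=
    eq_one_of_continuous_of_smul_eq_self hKfree (hq.comp φ.symm.continuous)
      (fun y => by simpa using hfix (φ.symm y)) (φ x)
  rw [φ.symm_apply_apply] at hq₁
  exact inv_mul_eq_one.1 hq₁

end OrbitEquivalence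

theorem orbit_cocycle_lipschitz_general
    {G K : Type*} [Group G] [Group K]
    [TopologicalSpace K] [DiscreteTopology K]
    (S : Set G) (hSsym : ∀ s ∈ S, s⁻¹ ∈ S)
    (hSgen : Subgroup.closure S = ⊤)
    (T : Set K) (hTsym : ∀ t ∈ T, t⁻¹ ∈ T)
    (hTgen : Subgroup.closure T = ⊤)
    {X Y : Type*} [TopologicalSpace X]
    [TopologicalSpace Y]
    [MulAction G X] [MulAction K Y]
    (hGcont : ∀ g : G, Continuous fun x : X => g • x)
    (hKfree : ∀ k : K, k ≠ 1 → Dense {y : Y | k • y ≠ y})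
    (φ : X ≃ₜ Y) (a : G → X → K)
    (ha : ∀ g, Continuous (a g))
    (haφ : ∀ g x, φ (g • x) = a g x • φ x)
    (C : ℕ) (hC : ∀ x : X, ∀ s ∈ S, wordLength T (a s x) ≤ C) :
    ∀ x : X, ∀ g₁ g₂ : G,
      wordLength T (a g₂ x * (a g₁ x)⁻¹) ≤ C * wordLength S (g₂ * g₁⁻¹) := by
  intro x g₁ g₂
  have hc := orbit_cocycle_mul hGcont hKfree φ ha haφ
  have hquot : a g₂ x * (a g₁ x)⁻¹ = a (g₂ * g₁⁻¹) (g₁ • x) := by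
    rw [mul_inv_eq_iff_eq_mul, ← hc, inv_mul_cancel_right]
  rw [hquot]
  exact wordLength_cocycle_le hc (Submonoid.closure_eq_top_of_inv_mem hSsym hSgen)
    (Submonoid.closure_eq_top_of_inv_mem hTsym hTgen) hC _ _

/-- For a continuous orbit equivalence between topologically free actions of finitely
generated groups, the orbit cocycle `g ↦ a(g,x)` is Lipschitz for the right-invariant
word metrics, with Lipschitz constant any bound `C` on the lengths of the values of
the cocycle on generators. -/
theorem orbit_cocycle_lipschitz
    {G K : Type*} [Group G] [Group K]
    [TopologicalSpace G] [DiscreteTopology G] [TopologicalSpace K] [DiscreteTopology K]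
    (S : Set G) (hSfin : S.Finite) (hSsym : ∀ s ∈ S, s⁻¹ ∈ S)
    (hSgen : Subgroup.closure S = ⊤)
    (T : Set K) (hTfin : T.Finite) (hTsym : ∀ t ∈ T, t⁻¹ ∈ T)
    (hTgen : Subgroup.closure T = ⊤)
    {X Y : Type*} [TopologicalSpace X] [CompactSpace X] [T2Space X]
    [TopologicalSpace Y] [CompactSpace Y] [T2Space Y]
    [MulAction G X] [MulAction K Y]
    (hGcont : ∀ g : G, Continuous fun x : X => g • x)
    (hKcont : ∀ k : K, Continuous fun y : Y => k • y)
    (hGfree : ∀ g : G, g ≠ 1 → Dense {x : X | g • x ≠ x})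
    (hKfree : ∀ k : K, k ≠ 1 → Dense {y : Y | k • y ≠ y})
    (φ : X ≃ₜ Y) (a : G → X → K) (b : K → Y → G)
    (ha : ∀ g, Continuous (a g)) (hb : ∀ k, Continuous (b k))
    (haφ : ∀ g x, φ (g • x) = a g x • φ x)
    (hbφ : ∀ k y, φ.symm (k • y) = b k y • φ.symm y)
    (C : ℕ) (hC : ∀ x : X, ∀ s ∈ S, wordLength T (a s x) ≤ C) :
    ∀ x : X, ∀ g₁ g₂ : G,
      wordLength T (a g₂ x * (a g₁ x)⁻¹) ≤ C * wordLength S (g₂ * g₁⁻¹) :=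
  orbit_cocycle_lipschitz_general S hSsym hSgen T hTsym hTgen hGcont hKfree φ a ha haφ C hC
end

section
/- Let α : D∞ ↷ X be a minimal continuous action of the infinite dihedral group D∞ = ⟨s⟩ ⋊ ⟨t⟩ on an infinite compact Hausdorff space X. Then α is topologically free, i.e., for every g ≠ e in D∞ the set {x ∈ X : gx ≠ x} is dense in X. -/
open DihedralGroup MulAction Pointwise

/-!
A rotation `r n` with `n ≠ 0` generates a subgroup of finite index in `D∞` (it contains the
kernel of the reduction onto the dihedral group of order `2|n|`), so a point fixed by it would
have a finite orbit, whereas in a minimal action on an infinite T1 space every orbit is infinite.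
Hence nontrivial rotations act freely, and two distinct reflections have no common fixed point.
If a reflection `t` fixed a nonempty open set `U` pointwise and `u ∈ U`, then for every `g` with
`g • u ∈ U` the reflection `g⁻¹ t g` would fix `u`, so `g⁻¹ t g = t` and `g ∈ {1, t}`. But
finitely many translates of `U` cover the compact space, so infinitely many `g` send `u` into `U`.
-/

namespace DihedralGroup

def castHom {m n : ℕ} (h : m ∣ n) : DihedralGroup n →* DihedralGroup m where
  toFun
    | r i => r (ZMod.castHom h (ZMod m) i)
    | sr i => sr (ZMod.castHom h (ZMod m) i)
  map_one' := by simp [← r_zero]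
  map_mul' := by
    rintro (i | i) (j | j) <;> simp [r_mul_r, r_mul_sr, sr_mul_r, sr_mul_sr, -ZMod.castHom_apply]

theorem finiteIndex_zpowers_r {n : ZMod 0} (hn : n ≠ 0) :
    (Subgroup.zpowers (r n)).FiniteIndex := by
  have : NeZero n.val := ⟨(ZMod.val_ne_zero n).mpr hn⟩
  refine Subgroup.finiteIndex_of_le (H := (castHom (dvd_zero n.val)).ker) ?_
  rintro (i | i) hi
  · have hi' : ZMod.cast i = (0 : ZMod n.val) := by simpa [castHom, ← r_zero] using hi
    -- `ZMod 0` is `ℤ` by definition, so this is divisibility of integers.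
    obtain ⟨q, hq⟩ : n ∣ i :=
      Int.natAbs_dvd.mp ((ZMod.intCast_zmod_eq_zero_iff_dvd i n.val).mp hi')
    exact ⟨q, (r_zpow n q).trans (congrArg r hq.symm)⟩
  · simp [castHom, ← r_zero] at hi

theorem exists_inv_mul_sr_mul_eq_sr (g : DihedralGroup 0) (k : ZMod 0) :
    ∃ j, g⁻¹ * sr k * g = sr j := by
  rcases g with a | b <;> simp [r_mul_sr, sr_mul_sr, sr_mul_r]

theorem inv_mul_sr_mul_eq_sr_iff {g : DihedralGroup 0} {k : ZMod 0} :
    g⁻¹ * sr k * g = sr k ↔ g = 1 ∨ g = sr k := by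
  rcases g with a | b
  · simp only [inv_r, r_mul_sr, sr_mul_r, sr.injEq, ← r_zero, r.injEq, reduceCtorEq, or_false]
    rw [← sub_eq_zero, show k - -a + a - k = 2 * a by ring, mul_eq_zero]
    simp
  · simp only [inv_sr, sr_mul_sr, r_mul_sr, sr.injEq, ← r_zero, reduceCtorEq, false_or]
    rw [← sub_eq_zero, show b - (k - b) - k = 2 * (b - k) by ring, mul_eq_zero, sub_eq_zero]
    simp

end DihedralGroup

namespace MulAction

variable {G X : Type*} [Group G] [TopologicalSpace X] [MulAction G X]

theorem infinite_orbit_of_isMinimal [T1Space X] [Infinite X] [IsMinimal G X] (x : X) :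
    (orbit G x).Infinite := by
  intro hfin
  have : orbit G x = Set.univ := by
    simpa [hfin.isClosed.closure_eq] using (dense_orbit G x).closure_eq
  exact Set.infinite_univ (this ▸ hfin)

theorem index_stabilizer_eq_zero_of_isMinimal [T1Space X] [Infinite X] [IsMinimal G X] (x : X) :
    (stabilizer G x).index = 0 := by
  rw [index_stabilizer, (infinite_orbit_of_isMinimal x).ncard]

theorem infinite_setOf_smul_mem [Infinite G] [CompactSpace X] [IsMinimal G X]
    [ContinuousConstSMul G X] {U : Set X} (hU : IsOpen U) (hne : U.Nonempty) (x : X) :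
    {g : G | g • x ∈ U}.Infinite := by
  intro hfin
  obtain ⟨I, hI⟩ := isCompact_univ.exists_finite_cover_smul G hU hne
  refine Set.infinite_univ ((I.finite_toSet.biUnion fun g _ => hfin.smul_set (a := g)).subset ?_)
  intro h _
  obtain ⟨g, hg, hgU⟩ := Set.mem_iUnion₂.mp (hI (Set.mem_univ (h • x)))
  refine Set.mem_iUnion₂.mpr ⟨g, hg, ?_⟩
  rw [Set.mem_smul_set_iff_inv_smul_mem] at hgU ⊢
  simpa [mul_smul] using hgU

end MulAction

namespace DihedralGroup

variable {X : Type*} [TopologicalSpace X] [T1Space X] [Infinite X]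
  [MulAction (DihedralGroup 0) X] [IsMinimal (DihedralGroup 0) X]

theorem r_smul_ne {n : ZMod 0} (hn : n ≠ 0) (x : X) :
    (r n : DihedralGroup 0) • x ≠ x := by
  intro hx
  have := finiteIndex_zpowers_r hn
  exact (Subgroup.finiteIndex_of_le (Subgroup.zpowers_le.mpr hx)).index_ne_zero
    (index_stabilizer_eq_zero_of_isMinimal x)

theorem eq_of_sr_smul_eq_self {i j : ZMod 0} {x : X}
    (hi : (sr i : DihedralGroup 0) • x = x) (hj : (sr j : DihedralGroup 0) • x = x) :
    i = j := by
  by_contra hij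
  refine r_smul_ne (sub_ne_zero.mpr (Ne.symm hij)) x ?_
  rw [← sr_mul_sr, mul_smul, hj, hi]

theorem exists_sr_smul_ne [CompactSpace X] [ContinuousConstSMul (DihedralGroup 0) X]
    (k : ZMod 0) {U : Set X} (hU : IsOpen U) (hne : U.Nonempty) :
    ∃ x ∈ U, (sr k : DihedralGroup 0) • x ≠ x := by
  by_contra! hfix
  obtain ⟨u, hu⟩ := hne
  refine infinite_setOf_smul_mem hU ⟨u, hu⟩ u ((Set.toFinite {1, sr k}).subset ?_)
  intro g hg
  obtain ⟨j, hj⟩ := exists_inv_mul_sr_mul_eq_sr g k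
  have hju : (sr j : DihedralGroup 0) • u = u := by
    rw [← hj, mul_smul, mul_smul, hfix _ hg, inv_smul_smul]
  rw [eq_of_sr_smul_eq_self hju (hfix u hu)] at hj
  exact inv_mul_sr_mul_eq_sr_iff.mp hj

end DihedralGroup

/-- A minimal continuous action of the infinite dihedral group on an infinite compact
Hausdorff space is topologically free. -/
theorem minimal_dihedral_action_topologically_free
    {X : Type*} [TopologicalSpace X] [CompactSpace X] [T2Space X] [Infinite X]
    [MulAction (DihedralGroup 0) X]
    (hcont : ∀ g : DihedralGroup 0, Continuous fun x : X => g • x)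
    (hmin : ∀ x : X, Dense (MulAction.orbit (DihedralGroup 0) x)) :
    ∀ g : DihedralGroup 0, g ≠ 1 → Dense {x : X | g • x ≠ x} := by
  have : ContinuousConstSMul (DihedralGroup 0) X := ⟨hcont⟩
  have : IsMinimal (DihedralGroup 0) X := ⟨hmin⟩
  rintro (n | k) hg
  · have hn : n ≠ 0 := by rintro rfl; exact hg r_zero
    simp [r_smul_ne hn]
  · exact dense_iff_inter_open.mpr fun U hU hne => exists_sr_smul_ne k hU hne
end

section
/- Let F be a finite group. Every automorphism Φ of the direct product F × ℤ has the form Φ(t, n) = (ε(t)·g^n, ±n) for some automorphism ε ∈ Aut(F) and some central element g ∈ C(F), where the sign ± is fixed independent of (t, n). -/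
/-!
The torsion elements of `F × ℤ` are exactly those of `F × {0}`, so an automorphism `Φ`
restricts to an automorphism `ε` of `F`, and its second coordinate is a homomorphism
`F × ℤ → ℤ` killing `F`, hence `(t, n) ↦ d n`; surjectivity of `Φ` forces `d = ±1`.
Since `(e, 1)` is central, so is `Φ (e, 1) = (g, d)`, and `(t, n) = (t, 0) + n • (e, 1)` gives
`Φ (t, n) = (ε t * gⁿ, d n)`.
-/

open Multiplicative

lemma mk_ofAdd_eq_mul_zpow {F : Type*} [Group F] (t : F) (n : ℤ) :
    ((t, ofAdd n) : F × Multiplicative ℤ) = (t, 1) * (1, ofAdd 1) ^ n := by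
  ext <;> simp [← Int.ofAdd_mul]

namespace MulAut

variable {F : Type*} [Group F]

lemma snd_apply_mk_one_of_isOfFinOrder {t : F} (ht : IsOfFinOrder t)
    (Φ : MulAut (F × Multiplicative ℤ)) : (Φ (t, 1)).2 = 1 :=
  ((MonoidHom.snd F _).isOfFinOrder <|
    Φ.toMonoidHom.isOfFinOrder <| ht.prod_mk .one).eq_one'

lemma fst_apply_one_ofAdd_one_mem_center (Φ : MulAut (F × Multiplicative ℤ)) :
    (Φ (1, ofAdd 1)).1 ∈ Subgroup.center F := by
  have h : ((1, ofAdd 1) : F × Multiplicative ℤ) ∈ Subgroup.center _ := by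
    rw [Subgroup.center_prod]
    exact ⟨one_mem _, Subgroup.mem_center_iff.mpr fun _ ↦ mul_comm _ _⟩
  have h' : Φ (1, ofAdd 1) ∈ Subgroup.center _ := MulEquivClass.apply_mem_center Φ h
  rw [Subgroup.center_prod] at h'
  exact h'.1

section IsMulTorsion

variable (hF : IsMulTorsion F)
include hF

lemma apply_mk_one (Φ : MulAut (F × Multiplicative ℤ)) (t : F) :
    Φ (t, 1) = ((Φ (t, 1)).1, 1) :=
  Prod.ext rfl (snd_apply_mk_one_of_isOfFinOrder (hF t) Φ)

/-- For torsion `F`, the factor `F × {1}` is the torsion subgroup of `F × ℤ`, so it is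
preserved by `Φ`. -/
def restrictTorsion (Φ : MulAut (F × Multiplicative ℤ)) : MulAut F where
  toFun t := (Φ (t, 1)).1
  invFun t := (Φ.symm (t, 1)).1
  left_inv t := by simp [← apply_mk_one hF]
  right_inv t := by simp [← apply_mk_one hF Φ.symm]
  map_mul' s t := by simp [← Prod.fst_mul, ← map_mul]

lemma apply_mk_ofAdd (Φ : MulAut (F × Multiplicative ℤ)) (t : F) (n : ℤ) :
    Φ (t, ofAdd n) =
      (restrictTorsion hF Φ t * (Φ (1, ofAdd 1)).1 ^ n, (Φ (1, ofAdd 1)).2 ^ n) := by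
  rw [mk_ofAdd_eq_mul_zpow, map_mul, map_zpow, apply_mk_one hF]
  ext <;> simp [restrictTorsion]

lemma snd_apply_one_ofAdd_one_eq_or (Φ : MulAut (F × Multiplicative ℤ)) :
    (Φ (1, ofAdd 1)).2 = ofAdd 1 ∨ (Φ (1, ofAdd 1)).2 = ofAdd (-1) := by
  obtain ⟨⟨t, n⟩, hx⟩ := Φ.surjective (1, ofAdd 1)
  have h := congrArg (toAdd ∘ Prod.snd) hx
  rw [← ofAdd_toAdd n, apply_mk_ofAdd hF] at h
  simp only [Function.comp_apply, toAdd_zpow, toAdd_ofAdd, smul_eq_mul] at h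
  rcases Int.eq_one_or_neg_one_of_mul_eq_one ((mul_comm _ _).trans h) with h | h
  exacts [.inl (toAdd.injective h), .inr (toAdd.injective h)]

end IsMulTorsion

end MulAut

/-- Every automorphism `Φ` of `F × ℤ` (with `F` a finite group) has the form
`Φ(t, n) = (ε(t)·gⁿ, ±n)` for some `ε ∈ Aut(F)` and central `g ∈ C(F)`, with the
sign fixed. -/
theorem aut_of_finite_times_int
    {F : Type*} [Group F] [Finite F]
    (Φ : MulAut (F × Multiplicative ℤ)) :
    ∃ ε : MulAut F, ∃ g ∈ Subgroup.center F,
      (∀ (t : F) (n : ℤ),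
        Φ (t, Multiplicative.ofAdd n) = (ε t * g ^ n, Multiplicative.ofAdd n)) ∨
      (∀ (t : F) (n : ℤ),
        Φ (t, Multiplicative.ofAdd n) = (ε t * g ^ n, Multiplicative.ofAdd (-n))) := by
  have hF : IsMulTorsion F := isMulTorsion_of_finite
  refine ⟨Φ.restrictTorsion hF, _, Φ.fst_apply_one_ofAdd_one_mem_center, ?_⟩
  rcases Φ.snd_apply_one_ofAdd_one_eq_or hF with h | h
  · exact .inl fun t n ↦ by rw [Φ.apply_mk_ofAdd hF, h, ← Int.ofAdd_mul, one_mul]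
  · exact .inr fun t n ↦ by rw [Φ.apply_mk_ofAdd hF, h, ← Int.ofAdd_mul, neg_one_mul]
end

section
/- Let α : ℤ ↷ X be a minimal free action on a compact Hausdorff space, F a finite group, and c, c' : ℤ × X → F two continuous cocycles. Define skew product actions of F × ℤ on X × F by (f, n)(x, f') := (α_n(x), c(n,x)·f'·f⁻¹) and similarly with c'. Then the map θ : (F × ℤ) × (X × F) → F × ℤ given by θ((t, n), (x, f)) = (t·f⁻¹·c(n,x)⁻¹·c'(n,x)·f, n) is a continuous cocycle with respect to the first skew product action, i.e., θ(g₁g₂, p) = θ(g₁, g₂·p)·θ(g₂, p) for all g₁, g₂ ∈ F × ℤ and p ∈ X × F. -/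
/-!
Both claims hold pointwise. Writing `y = α_{n₂} x` and `s = c(n₂,x)·f·t₂⁻¹` for the fibre
coordinate of `(t₂,n₂)·(x,f)`, the `F`-component of `θ((t₁,n₁),(y,s))·θ((t₂,n₂),(x,f))` is
`t₁·s⁻¹·c(n₁,y)⁻¹·c'(n₁,y)·s·t₂·f⁻¹·c(n₂,x)⁻¹·c'(n₂,x)·f`, in which `s·t₂·f⁻¹ = c(n₂,x)`
cancels, leaving `t₁t₂·f⁻¹·(c(n₁,y)c(n₂,x))⁻¹·c'(n₁,y)c'(n₂,x)·f`; the cocycle identities for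
`c` and `c'` turn this into the `F`-component of `θ((t₁t₂, n₁+n₂),(x,f))`.
-/

section SkewProduct

variable {X F : Type*} [Group F]

def skewAction (α : ℤ → X → X) (c : ℤ → X → F) (g : F × Multiplicative ℤ) (p : X × F) :
    X × F :=
  (α g.2.toAdd p.1, c g.2.toAdd p.1 * p.2 * g.1⁻¹)

def twistCocycle (c c' : ℤ → X → F) (g : F × Multiplicative ℤ) (p : X × F) :
    F × Multiplicative ℤ :=
  (g.1 * p.2⁻¹ * (c g.2.toAdd p.1)⁻¹ * c' g.2.toAdd p.1 * p.2, g.2)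

theorem continuous_twistCocycle [TopologicalSpace X] [TopologicalSpace F] [ContinuousMul F]
    [ContinuousInv F] {c c' : ℤ → X → F} (hc : ∀ n, Continuous (c n))
    (hc' : ∀ n, Continuous (c' n)) (g : F × Multiplicative ℤ) :
    Continuous (twistCocycle c c' g) := by
  have := hc g.2.toAdd
  have := hc' g.2.toAdd
  unfold twistCocycle
  fun_prop

theorem twistCocycle_mul {α : ℤ → X → X} {c c' : ℤ → X → F}
    (hc : ∀ m n x, c (m + n) x = c m (α n x) * c n x)
    (hc' : ∀ m n x, c' (m + n) x = c' m (α n x) * c' n x)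
    (g₁ g₂ : F × Multiplicative ℤ) (p : X × F) :
    twistCocycle c c' (g₁ * g₂) p =
      twistCocycle c c' g₁ (skewAction α c g₂ p) * twistCocycle c c' g₂ p := by
  obtain ⟨t₁, n₁⟩ := g₁
  obtain ⟨t₂, n₂⟩ := g₂
  obtain ⟨x, f⟩ := p
  ext
  · simp only [twistCocycle, skewAction, Prod.mk_mul_mk, toAdd_mul, hc, hc']
    group
  · rfl

end SkewProduct

theorem theta_is_cocycle_for_skew_product_general
    {X : Type*} [TopologicalSpace X]
    {F : Type*} [Group F] [TopologicalSpace F] [DiscreteTopology F]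
    (α : ℤ → X → X)
    (c c' : ℤ → X → F)
    (hccont : ∀ n, Continuous (c n)) (hc'cont : ∀ n, Continuous (c' n))
    (hccoc : ∀ m n x, c (m + n) x = c m (α n x) * c n x)
    (hc'coc : ∀ m n x, c' (m + n) x = c' m (α n x) * c' n x)
    (act : F × Multiplicative ℤ → X × F → X × F)
    (hact : ∀ (f : F) (n : ℤ) (x : X) (f' : F),
      act (f, Multiplicative.ofAdd n) (x, f') = (α n x, c n x * f' * f⁻¹))
    (θ : F × Multiplicative ℤ → X × F → F × Multiplicative ℤ)
    (hθ : ∀ (t : F) (n : ℤ) (x : X) (f : F),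
      θ (t, Multiplicative.ofAdd n) (x, f) =
        (t * f⁻¹ * (c n x)⁻¹ * c' n x * f, Multiplicative.ofAdd n)) :
    (∀ g : F × Multiplicative ℤ, Continuous (θ g)) ∧
    (∀ (g₁ g₂ : F × Multiplicative ℤ) (p : X × F),
      θ (g₁ * g₂) p = θ g₁ (act g₂ p) * θ g₂ p) := by
  have hact' : act = skewAction α c := by
    funext ⟨f, n⟩ ⟨x, f'⟩
    exact hact f n.toAdd x f'
  have hθ' : θ = twistCocycle c c' := by
    funext ⟨t, n⟩ ⟨x, f⟩
    exact hθ t n.toAdd x f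
  subst hact' hθ'
  exact ⟨continuous_twistCocycle hccont hc'cont, twistCocycle_mul hccoc hc'coc⟩

/-- For a minimal free `ℤ`-action `α` on a compact Hausdorff space and two continuous
cocycles `c, c' : ℤ × X → F` into a finite group, the map
`θ((t,n),(x,f)) = (t·f⁻¹·c(n,x)⁻¹·c'(n,x)·f, n)` is a continuous cocycle with respect
to the skew product action `(f,n)·(x,f') = (α_n x, c(n,x)·f'·f⁻¹)` of `F × ℤ` on `X × F`. -/
theorem theta_is_cocycle_for_skew_product
    {X : Type*} [TopologicalSpace X] [CompactSpace X] [T2Space X]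
    {F : Type*} [Group F] [Finite F] [TopologicalSpace F] [DiscreteTopology F]
    (α : ℤ → X → X) (hcont : ∀ n, Continuous (α n))
    (hzero : ∀ x, α 0 x = x) (hadd : ∀ m n x, α (m + n) x = α m (α n x))
    (hmin : ∀ x : X, Dense (Set.range fun n : ℤ => α n x))
    (hfree : ∀ (n : ℤ) (x : X), n ≠ 0 → α n x ≠ x)
    (c c' : ℤ → X → F)
    (hccont : ∀ n, Continuous (c n)) (hc'cont : ∀ n, Continuous (c' n))
    (hccoc : ∀ m n x, c (m + n) x = c m (α n x) * c n x)
    (hc'coc : ∀ m n x, c' (m + n) x = c' m (α n x) * c' n x)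
    (act : F × Multiplicative ℤ → X × F → X × F)
    (hact : ∀ (f : F) (n : ℤ) (x : X) (f' : F),
      act (f, Multiplicative.ofAdd n) (x, f') = (α n x, c n x * f' * f⁻¹))
    (θ : F × Multiplicative ℤ → X × F → F × Multiplicative ℤ)
    (hθ : ∀ (t : F) (n : ℤ) (x : X) (f : F),
      θ (t, Multiplicative.ofAdd n) (x, f) =
        (t * f⁻¹ * (c n x)⁻¹ * c' n x * f, Multiplicative.ofAdd n)) :
    (∀ g : F × Multiplicative ℤ, Continuous (θ g)) ∧
    (∀ (g₁ g₂ : F × Multiplicative ℤ) (p : X × F),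
      θ (g₁ * g₂) p = θ g₁ (act g₂ p) * θ g₂ p) :=
  theta_is_cocycle_for_skew_product_general α c c' hccont hc'cont hccoc hc'coc act hact θ hθ
end

section
/- Let (n_i) be a strictly increasing sequence of positive integers with n_i | n_{i+1}, let X = lim← ℤ/n_iℤ be the odometer space with the odometer ℤ-action T, and let p be a prime with sup_i ord_p(n_i) = ∞ (where ord_p(m) is the largest k with p^k | m). Then every continuous cocycle c : ℤ × X → ℤ/pℤ is a coboundary. -/
instance (m : ℕ) : TopologicalSpace (ZMod m) := ⊥

/-- The odometer space `lim← ℤ/n_iℤ`. -/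
def OdometerSpace (n : ℕ → ℕ) (h : ∀ i, n i ∣ n (i + 1)) : Type :=
  {x : (i : ℕ) → ZMod (n i) // ∀ i, ZMod.castHom (h i) (ZMod (n i)) (x (i + 1)) = x i}

instance (n : ℕ → ℕ) (h : ∀ i, n i ∣ n (i + 1)) : TopologicalSpace (OdometerSpace n h) := by
  unfold OdometerSpace; infer_instance

/-- The odometer `ℤ`-action: addition of `m` in every coordinate. -/
def odometer (n : ℕ → ℕ) (h : ∀ i, n i ∣ n (i + 1)) (m : ℤ)
    (x : OdometerSpace n h) : OdometerSpace n h :=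
  ⟨fun i => x.1 i + (m : ZMod (n i)), fun i => by
    rw [map_add, x.2 i, map_intCast]⟩

/-! A continuous `ℤ/pℤ`-valued function on the odometer depends on only finitely many
coordinates, so `c 1` factors through some coordinate `x ↦ x_i`. Choose `j` with `p * n_i ∣ n_j`.
By the cocycle identity `c n_j x` is a sum of `n_j / n_i` equal sums of `c 1` over
`n_i`-blocks of the orbit, hence `0` in `ℤ/pℤ`; so `c` is `n_j`-periodic in its first argument.
A periodic cocycle is the coboundary of `y ↦ -c (u y) y` whenever `u` moves by `-1 (mod n_j)`
along the action; `u y = (-y_j).val` is such a function, and it is locally constant. -/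

instance (m : ℕ) : DiscreteTopology (ZMod m) := ⟨rfl⟩

open Filter Topology

def IsAddCocycle {X A : Type*} [AddAction ℤ X] [AddCommGroup A] (c : ℤ → X → A) : Prop :=
  ∀ (k m : ℤ) (x : X), c (k + m) x = c k (m +ᵥ x) + c m x

namespace IsAddCocycle

variable {X A : Type*} [AddAction ℤ X] [AddCommGroup A] {c : ℤ → X → A}

theorem apply_zero (hc : IsAddCocycle c) (x : X) : c 0 x = 0 := by
  simpa using hc 0 0 x

theorem apply_natCast_vadd (hc : IsAddCocycle c) {M : ℤ} (hM : ∀ x, c 1 (M +ᵥ x) = c 1 x)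
    (t : ℕ) (x : X) : c t (M +ᵥ x) = c t x := by
  induction t generalizing x with
  | zero => simp [hc.apply_zero]
  | succ t ih =>
    push_cast
    rw [hc, hc, hM, vadd_vadd, add_comm 1 M, ← vadd_vadd, ih]

theorem apply_natCast_mul (hc : IsAddCocycle c) {M : ℤ} (hM : ∀ x, c M (M +ᵥ x) = c M x)
    (k : ℕ) (x : X) : c (k * M) x = k • c M x := by
  induction k generalizing x with
  | zero => simp [hc.apply_zero]
  | succ k ih =>
    push_cast
    rw [add_one_mul, hc, ih, hM, succ_nsmul]

theorem periodic (hc : IsAddCocycle c) {N : ℤ} (hN : ∀ x, c N x = 0) : Function.Periodic c N :=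
  fun a => funext fun x => by rw [add_comm, hc, hN, zero_add]

theorem eq_coboundary_of_apply_one (hc : IsAddCocycle c) {L : X → A}
    (h1 : ∀ x, c 1 x = L ((1 : ℤ) +ᵥ x) - L x) (m : ℤ) (x : X) : c m x = L (m +ᵥ x) - L x := by
  have h_neg_one : ∀ x, c (-1) x = L ((-1 : ℤ) +ᵥ x) - L x := fun x => by
    have h := hc 1 (-1) x
    rw [add_neg_cancel, hc.apply_zero, h1, vadd_vadd, add_neg_cancel, zero_vadd] at h
    rw [eq_sub_of_add_eq' h.symm, zero_sub, neg_sub]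
  induction m using Int.induction_on generalizing x with
  | zero => rw [hc.apply_zero, zero_vadd, sub_self]
  | succ k ih => rw [hc, ih, h1, vadd_vadd, sub_add_sub_cancel]
  | pred k ih => rw [sub_eq_add_neg, hc, ih, h_neg_one, vadd_vadd, sub_add_sub_cancel]

theorem eq_coboundary_of_periodic (hc : IsAddCocycle c) {N : ℤ} (hN : Function.Periodic c N)
    {u : X → ℤ} (hu : ∀ x, u ((1 : ℤ) +ᵥ x) + 1 ≡ u x [ZMOD N]) (m : ℤ) (x : X) :
    c m x = -c (u (m +ᵥ x)) (m +ᵥ x) - -c (u x) x := by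
  refine hc.eq_coboundary_of_apply_one (L := fun y => -c (u y) y) (fun x => ?_) m x
  obtain ⟨k, hk⟩ := (hu x).dvd
  have hux : u x = u ((1 : ℤ) +ᵥ x) + 1 + k • N := by rw [smul_eq_mul, mul_comm]; omega
  rw [hux, hN.zsmul k, hc, neg_sub_neg, add_sub_cancel_left]

end IsAddCocycle

theorem exists_mul_dvd_of_forall_pow_dvd {n : ℕ → ℕ} (h : ∀ i, n i ∣ n (i + 1)) {p : ℕ}
    (hp : p.Prime) (hpow : ∀ N : ℕ, ∃ i, p ^ N ∣ n i) {i : ℕ} (hi : n i ≠ 0) :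
    ∃ j, n i * p ∣ n j := by
  obtain ⟨e, m, hpm, hm⟩ := Nat.exists_eq_pow_mul_and_not_dvd hi p hp.ne_one
  obtain ⟨j, hj⟩ := hpow (e + 1)
  have h_dvd {a b : ℕ} (hab : a ≤ b) : n a ∣ n b := Nat.rel_of_forall_rel_succ_of_le _ h hab
  refine ⟨max i j, ?_⟩
  rw [hm, mul_right_comm, ← pow_succ]
  exact ((hp.coprime_iff_not_dvd.2 hpm).pow_left _).mul_dvd_of_dvd_of_dvd
    (hj.trans (h_dvd (le_max_right i j)))
    ((Dvd.intro_left _ hm.symm).trans (h_dvd (le_max_left i j)))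

namespace OdometerSpace

variable {n : ℕ → ℕ} {h : ∀ i, n i ∣ n (i + 1)}

instance instAddAction : AddAction ℤ (OdometerSpace n h) where
  vadd := odometer n h
  zero_vadd x := Subtype.ext <| funext fun i =>
    show x.1 i + ((0 : ℤ) : ZMod (n i)) = x.1 i by simp
  add_vadd a b x := Subtype.ext <| funext fun i =>
    show x.1 i + ((a + b : ℤ) : ZMod (n i)) = x.1 i + b + a by push_cast; ring

@[simp]
theorem vadd_apply (m : ℤ) (x : OdometerSpace n h) (i : ℕ) :
    (m +ᵥ x).1 i = x.1 i + m :=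
  rfl

theorem apply_eq_of_apply_eq {x y : OdometerSpace n h} {i j : ℕ} (hij : i ≤ j)
    (hxy : x.1 j = y.1 j) : x.1 i = y.1 i := by
  induction j, hij using Nat.le_induction with
  | base => exact hxy
  | succ j _ ih => exact ih (by rw [← x.2 j, ← y.2 j, hxy])

theorem continuous_apply (i : ℕ) : Continuous fun x : OdometerSpace n h => x.1 i :=
  (_root_.continuous_apply i).comp continuous_subtype_val

instance [∀ i, NeZero (n i)] : CompactSpace (OdometerSpace n h) := by
  have h_closed : IsClosed {x : (i : ℕ) → ZMod (n i) |
      ∀ i, ZMod.castHom (h i) (ZMod (n i)) (x (i + 1)) = x i} := by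
    rw [Set.ofPred_forall]
    exact isClosed_iInter fun i =>
      isClosed_eq (continuous_of_discreteTopology.comp (_root_.continuous_apply _))
        (_root_.continuous_apply i)
  exact isCompact_iff_compactSpace.1 h_closed.isCompact

theorem hasBasis_nhds (x : OdometerSpace n h) :
    (𝓝 x).HasBasis (fun _ => True) fun i => {y | y.1 i = x.1 i} := by
  have h_nhds : 𝓝 x = ⨅ i, 𝓟 {y : OdometerSpace n h | y.1 i = x.1 i} := by
    rw [show 𝓝 x = comap (fun y : OdometerSpace n h => y.1) (𝓝 x.1) from nhds_induced _ _]
    simp only [nhds_pi, Filter.pi, nhds_discrete, comap_iInf, comap_pure, comap_principal]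
    rfl
  rw [h_nhds]
  exact hasBasis_iInf_principal <| Antitone.directed_ge fun i j hij y hy =>
    apply_eq_of_apply_eq hij hy

theorem exists_factorsThrough_apply [∀ i, NeZero (n i)] {β : Type*} [TopologicalSpace β]
    [DiscreteTopology β] {f : OdometerSpace n h → β} (hf : Continuous f) :
    ∃ i, Function.FactorsThrough f fun x : OdometerSpace n h => x.1 i := by
  set U : ℕ → Set (OdometerSpace n h) := fun i => {x | ∀ y, y.1 i = x.1 i → f y = f x}
  have hU_open (i : ℕ) : IsOpen (U i) := isOpen_iff_forall_mem_open.2 fun x hx =>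
    ⟨{y | y.1 i = x.1 i}, fun y hy z hz => (hx z (hz.trans hy)).trans (hx y hy).symm,
      (isOpen_discrete {x.1 i}).preimage (continuous_apply i), rfl⟩
  have hU_cover : Set.univ ⊆ ⋃ i, U i := fun x _ => by
    obtain ⟨i, -, hi⟩ := (hasBasis_nhds x).mem_iff.1
      (hf.continuousAt.preimage_mem_nhds ((isOpen_discrete {f x}).mem_nhds rfl))
    exact Set.mem_iUnion.2 ⟨i, hi⟩
  have hU_mono : Monotone U := fun i j hij x hx y hy => hx y (apply_eq_of_apply_eq hij hy)
  obtain ⟨i, hi⟩ := isCompact_univ.elim_directed_cover U hU_open hU_cover hU_mono.directed_le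
  exact ⟨i, fun x y hxy => hi (Set.mem_univ y) x hxy⟩

end OdometerSpace

theorem odometer_cocycle_coboundary_of_unbounded_valuation_general
    (n : ℕ → ℕ) (hpos : ∀ i, 0 < n i)
    (h : ∀ i, n i ∣ n (i + 1))
    (p : ℕ) (hp : p.Prime) (hord : ∀ N : ℕ, ∃ i, p ^ N ∣ n i)
    (c : ℤ → OdometerSpace n h → ZMod p)
    (hccont : ∀ m, Continuous (c m))
    (hcoc : ∀ (k m : ℤ) (x : OdometerSpace n h),
      c (k + m) x = c k (odometer n h m x) + c m x) :
    ∃ L : OdometerSpace n h → ZMod p, Continuous L ∧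
      ∀ (m : ℤ) (x : OdometerSpace n h), c m x = L (odometer n h m x) - L x := by
  have : ∀ i, NeZero (n i) := fun i => ⟨(hpos i).ne'⟩
  have hc : IsAddCocycle c := hcoc
  obtain ⟨i, hi⟩ := OdometerSpace.exists_factorsThrough_apply (hccont 1)
  obtain ⟨j, k, hk⟩ := exists_mul_dvd_of_forall_pow_dvd h hp hord (hpos i).ne'
  have h_inv (x : OdometerSpace n h) : c 1 ((n i : ℤ) +ᵥ x) = c 1 x := hi (by simp)
  have h_period (x : OdometerSpace n h) : c (n j) x = 0 :=
    calc c (n j) x = c ((p * k : ℕ) * (n i : ℤ)) x := by rw [hk]; congr 1; push_cast; ring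
      _ = (p * k) • c (n i) x := hc.apply_natCast_mul (hc.apply_natCast_vadd h_inv (n i)) _ x
      _ = 0 := by rw [nsmul_eq_mul, Nat.cast_mul, ZMod.natCast_self, zero_mul, zero_mul]
  set u : OdometerSpace n h → ℤ := fun y => (-y.1 j).val
  have hu_cont : Continuous u :=
    (continuous_of_discreteTopology (f := fun a : ZMod (n j) => ((-a).val : ℤ))).comp
      (OdometerSpace.continuous_apply j)
  have hu (x : OdometerSpace n h) : u ((1 : ℤ) +ᵥ x) + 1 ≡ u x [ZMOD n j] := by
    rw [← ZMod.intCast_eq_intCast_iff]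
    simp [u]
  have hcu_cont : Continuous fun y => c (u y) y :=
    (continuous_prod_of_discrete_left (f := Function.uncurry c) |>.2 hccont).comp
      (hu_cont.prodMk continuous_id)
  exact ⟨fun y => -c (u y) y, hcu_cont.neg,
    hc.eq_coboundary_of_periodic (hc.periodic h_period) hu⟩

/-- If `sup_i ord_p(n_i) = ∞` then every continuous `ℤ/pℤ`-valued cocycle over the
odometer `lim← ℤ/n_iℤ` is a coboundary. -/
theorem odometer_cocycle_coboundary_of_unbounded_valuation
    (n : ℕ → ℕ) (hpos : ∀ i, 0 < n i) (hmono : StrictMono n)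
    (h : ∀ i, n i ∣ n (i + 1))
    (p : ℕ) (hp : p.Prime) (hord : ∀ N : ℕ, ∃ i, p ^ N ∣ n i)
    (c : ℤ → OdometerSpace n h → ZMod p)
    (hccont : ∀ m, Continuous (c m))
    (hcoc : ∀ (k m : ℤ) (x : OdometerSpace n h),
      c (k + m) x = c k (odometer n h m x) + c m x) :
    ∃ L : OdometerSpace n h → ZMod p, Continuous L ∧
      ∀ (m : ℤ) (x : OdometerSpace n h), c m x = L (odometer n h m x) - L x :=
  odometer_cocycle_coboundary_of_unbounded_valuation_general n hpos h p hp hord c hccont hcoc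
end

section
/- Let f : X → X be a minimal homeomorphism of a compact Hausdorff space and c : ℤ × X → ℝ a continuous cocycle (c(m+n, x) = c(m, f^n x) + c(n, x)) that is bounded, i.e., sup_{(n,x) ∈ ℤ×X} |c(n, x)| < ∞. Then c is a continuous coboundary: there exists continuous φ : X → ℝ with c(n, x) = φ(f^n x) − φ(x) for all n ∈ ℤ, x ∈ X. -/
/-!
Put `φ x = ⨆ n, c n x`, finite by boundedness. The cocycle identity gives
`φ (α m x) = φ x - c m x`, and `φ` is lower semicontinuous as a supremum of continuous functions.
The same holds for `φ'` built from the cocycle `-c`, so `φ + φ'` is lower semicontinuous and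
invariant. Its sublevel sets are closed and invariant, so when every orbit is dense it is
constant. Then `φ = const - φ'` is also upper semicontinuous, hence continuous, and `-φ` is the
transfer function.
-/

open Set

theorem LowerSemicontinuous.le_of_denseRange {X ι β : Type*} [TopologicalSpace X] [LinearOrder β]
    {u : X → β} (hu : LowerSemicontinuous u) {f : ι → X} (hf : DenseRange f) {t : β}
    (h : ∀ i, u (f i) ≤ t) (x : X) : u x ≤ t := by
  have hsub : closure (range f) ⊆ u ⁻¹' Iic t :=
    (hu.isClosed_preimage t).closure_subset_iff.2 (range_subset_iff.2 h)
  exact hsub (hf.closure_range ▸ mem_univ x)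

theorem LowerSemicontinuous.eq_of_invariant_of_denseRange {X ι β : Type*} [TopologicalSpace X]
    [LinearOrder β] {u : X → β} (hu : LowerSemicontinuous u) {α : ι → X → X}
    (hmin : ∀ x, DenseRange fun i => α i x) (hinv : ∀ i x, u (α i x) = u x) (x y : X) :
    u x = u y :=
  le_antisymm (hu.le_of_denseRange (hmin y) (fun i => (hinv i y).le) x)
    (hu.le_of_denseRange (hmin x) (fun i => (hinv i x).le) y)

section Cocycle

variable {X G : Type*} [AddGroup G] {α : G → X → X} {c : G → X → ℝ}

theorem ciSup_cocycle_apply (hcoc : ∀ m n x, c (m + n) x = c m (α n x) + c n x) {x : X}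
    (hbdd : BddAbove (range fun n => c n x)) (m : G) :
    ⨆ n, c n (α m x) = (⨆ n, c n x) - c m x := by
  have hshift : ∀ n, c (n - m) (α m x) = c n x - c m x := fun n => by
    rw [eq_sub_iff_add_eq, ← hcoc, sub_add_cancel]
  rw [← (Equiv.subRight m).iSup_comp, ciSup_sub hbdd]
  exact congrArg iSup (funext hshift)

theorem continuous_ciSup_cocycle [TopologicalSpace X]
    (hmin : ∀ x, DenseRange fun n => α n x) (hccont : ∀ n, Continuous (c n))
    (hcoc : ∀ m n x, c (m + n) x = c m (α n x) + c n x)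
    (habove : ∀ x, BddAbove (range fun n => c n x))
    (hbelow : ∀ x, BddBelow (range fun n => c n x)) :
    Continuous fun x => ⨆ n, c n x := by
  set φ : X → ℝ := fun x => ⨆ n, c n x
  set φ' : X → ℝ := fun x => ⨆ n, -c n x
  have hφ : LowerSemicontinuous φ :=
    lowerSemicontinuous_ciSup habove fun n => (hccont n).lowerSemicontinuous
  have hφ' : LowerSemicontinuous φ' :=
    lowerSemicontinuous_ciSup (fun x => (hbelow x).range_neg) fun n =>
      (hccont n).neg.lowerSemicontinuous
  have hcoc' : ∀ m n x, -c (m + n) x = -c m (α n x) + -c n x := fun m n x => by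
    rw [hcoc, neg_add]
  have hinv : ∀ m x, (φ + φ') (α m x) = (φ + φ') x := fun m x => by
    have h' := ciSup_cocycle_apply (c := fun n y => -c n y) hcoc' (hbelow x).range_neg m
    simp only [Pi.add_apply, φ, φ', ciSup_cocycle_apply hcoc (habove x), h']
    ring
  have hconst : Continuous (φ + φ') :=
    continuous_of_const ((hφ.add hφ').eq_of_invariant_of_denseRange hmin hinv)
  have hφ_usc : UpperSemicontinuous φ := by
    simpa using hconst.upperSemicontinuous.add hφ'.neg
  exact continuous_iff_lower_upperSemicontinuous.2 ⟨hφ, hφ_usc⟩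

end Cocycle

theorem bounded_cocycle_is_coboundary_general
    {X : Type*} [TopologicalSpace X]
    (α : ℤ → X → X)
    (hmin : ∀ x : X, Dense (Set.range fun n : ℤ => α n x))
    (c : ℤ → X → ℝ) (hccont : ∀ n, Continuous (c n))
    (hcoc : ∀ (m n : ℤ) (x : X), c (m + n) x = c m (α n x) + c n x)
    (C : ℝ) (hbd : ∀ (n : ℤ) (x : X), |c n x| ≤ C) :
    ∃ φ : X → ℝ, Continuous φ ∧ ∀ (n : ℤ) (x : X), c n x = φ (α n x) - φ x := by
  have habove : ∀ x, BddAbove (range fun n => c n x) := fun x =>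
    ⟨C, forall_mem_range.2 fun n => (abs_le.1 (hbd n x)).2⟩
  have hbelow : ∀ x, BddBelow (range fun n => c n x) := fun x =>
    ⟨-C, forall_mem_range.2 fun n => (abs_le.1 (hbd n x)).1⟩
  refine ⟨fun x => -⨆ n, c n x,
    (continuous_ciSup_cocycle hmin hccont hcoc habove hbelow).neg, fun n x => ?_⟩
  beta_reduce
  rw [ciSup_cocycle_apply hcoc (habove x)]
  ring

/-- Cocycle form of the Gottschalk–Hedlund theorem: a bounded continuous real-valued
cocycle over a minimal homeomorphism (given by the `ℤ`-action it generates) of a compact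
Hausdorff space is a continuous coboundary. -/
theorem bounded_cocycle_is_coboundary
    {X : Type*} [TopologicalSpace X] [CompactSpace X] [T2Space X]
    (α : ℤ → X → X) (hcont : ∀ n, Continuous (α n))
    (hzero : ∀ x, α 0 x = x) (hadd : ∀ m n x, α (m + n) x = α m (α n x))
    (hmin : ∀ x : X, Dense (Set.range fun n : ℤ => α n x))
    (c : ℤ → X → ℝ) (hccont : ∀ n, Continuous (c n))
    (hcoc : ∀ (m n : ℤ) (x : X), c (m + n) x = c m (α n x) + c n x)
    (C : ℝ) (hbd : ∀ (n : ℤ) (x : X), |c n x| ≤ C) :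
    ∃ φ : X → ℝ, Continuous φ ∧ ∀ (n : ℤ) (x : X), c n x = φ (α n x) - φ x :=
  bounded_cocycle_is_coboundary_general α hmin c hccont hcoc C hbd
end
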